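/- arXiv:2301.12728 — 3 statements merged into one kernel-verified Lean document; each statement's English description precedes it below -/
import Mathlib

section
/- For every integer k ≥ 0, one has 1 + ∑_{j=1}^{k} ∑_{(i_1,...,i_j): i_l ≥ 1, j ≤ i_1+...+i_j ≤ k} (-1)^j · (k+1)!/(i_1! ··· i_j! (k+1-i_1-...-i_j)!) = (-1)^k. -/
/-!
Summed over compositions `(i₁, …, i_j)` of `m`, the terms `(k+1)! / (i₁! ⋯ i_j! (k+1-m)!)` give
`(k+1)! [xᵐ](eˣ - 1)^j · [x^(k+1-m)](eˣ - 1)`, so the left-hand side equals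
`(k+1)! [x^(k+1)] ∑_{j=0}^{k} (-1)^j (eˣ - 1)^(j+1)`. Up to degree `k+1` this truncated geometric
series agrees with `(eˣ - 1) / eˣ = 1 - e⁻ˣ`, whose coefficient of `x^(k+1)` is `(-1)^k / (k+1)!`.
-/
open Finset PowerSeries
open scoped Nat

theorem Finset.Nat.sum_antidiagonalTuple_succ {M : Type*} [AddCommMonoid M] (k n : ℕ)
    (f : (Fin (k + 1) → ℕ) → M) :
    ∑ x ∈ Nat.antidiagonalTuple (k + 1) n, f x =
      ∑ p ∈ antidiagonal n, ∑ x ∈ Nat.antidiagonalTuple k p.2, f (Fin.cons p.1 x) := by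
  rw [sum_sigma']
  refine sum_nbij' (fun x => ⟨(x 0, n - x 0), Fin.tail x⟩) (fun p => Fin.cons p.1.1 p.2)
    ?_ ?_ (fun x _ => Fin.cons_self_tail x) ?_ (fun x _ => by simp)
  · intro x hx
    simp only [mem_sigma, HasAntidiagonal.mem_antidiagonal,
      Nat.mem_antidiagonalTuple, Fin.sum_univ_succ, Fin.tail] at hx ⊢
    omega
  · rintro ⟨⟨a, b⟩, x⟩ hx
    simp only [mem_sigma, HasAntidiagonal.mem_antidiagonal,
      Nat.mem_antidiagonalTuple, Fin.sum_cons] at hx ⊢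
    omega
  · rintro ⟨⟨a, b⟩, x⟩ hx
    simp only [mem_sigma, HasAntidiagonal.mem_antidiagonal] at hx
    simp [← hx.1]

namespace PowerSeries

variable {R : Type*}

theorem coeff_pow_eq_sum_antidiagonalTuple [CommSemiring R] (f : R⟦X⟧) (k n : ℕ) :
    coeff n (f ^ k) = ∑ x ∈ Finset.Nat.antidiagonalTuple k n, ∏ i, coeff (x i) f := by
  induction k generalizing n with
  | zero => cases n <;> simp [coeff_one]
  | succ k ih =>
    rw [pow_succ', coeff_mul, Finset.Nat.sum_antidiagonalTuple_succ]
    simp only [ih, mul_sum, Fin.prod_univ_succ, Fin.cons_zero, Fin.cons_succ]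

theorem X_pow_dvd_pow_of_constantCoeff_eq_zero [CommSemiring R] {f : R⟦X⟧}
    (hf : constantCoeff f = 0) (k : ℕ) : X ^ k ∣ f ^ k :=
  pow_dvd_pow_of_dvd (X_dvd_iff.mpr hf) k

theorem coeff_sum_range_neg_one_pow_smul_pow_succ [CommRing R] {g h : R⟦X⟧}
    (hg : constantCoeff g = 0) (hh : (1 + g) * h = 1) {n N : ℕ} (hn : n ≤ N) :
    coeff n (∑ j ∈ range N, (-1 : R) ^ j • g ^ (j + 1)) = coeff n (g * h) := by
  have geom : (1 + g) * ∑ j ∈ range N, (-g) ^ j = 1 - (-g) ^ N := by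
    simpa using mul_neg_geom_sum (-g) N
  have key : ∑ j ∈ range N, (-1 : R) ^ j • g ^ (j + 1) = g * h - (-1) ^ N * h * g ^ (N + 1) :=
    calc ∑ j ∈ range N, (-1 : R) ^ j • g ^ (j + 1)
        = g * ((1 + g) * h) * ∑ j ∈ range N, (-g) ^ j := by
          rw [hh, mul_one, mul_sum]
          refine sum_congr rfl fun j _ => ?_
          rw [smul_eq_C_mul, map_pow, map_neg, map_one]
          ring
      _ = g * h * ((1 + g) * ∑ j ∈ range N, (-g) ^ j) := by ring
      _ = _ := by rw [geom]; ring
  have tail : coeff n ((-1) ^ N * h * g ^ (N + 1)) = 0 :=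
    X_pow_dvd_iff.mp ((X_pow_dvd_pow_of_constantCoeff_eq_zero hg _).mul_left _) n (by omega)
  rw [key, map_sub, tail, sub_zero]

theorem coeff_pow_succ_eq_sum_Icc [CommSemiring R] {g : R⟦X⟧}
    (hg : constantCoeff g = 0) (j k : ℕ) :
    ∑ m ∈ Icc j k, coeff m (g ^ j) * coeff (k + 1 - m) g = coeff (k + 1) (g ^ (j + 1)) := by
  rw [pow_succ, coeff_mul,
    Finset.Nat.sum_antidiagonal_eq_sum_range_succ (fun a b => coeff a (g ^ j) * coeff b g)]
  refine sum_subset (fun m hm => by simp only [mem_Icc, mem_range] at hm ⊢; omega)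
    fun m hm hm' => ?_
  simp only [mem_range, mem_Icc, not_and_or, not_le] at hm hm'
  rcases hm' with hm' | hm'
  · rw [X_pow_dvd_iff.mp (X_pow_dvd_pow_of_constantCoeff_eq_zero hg j) m hm', zero_mul]
  · rw [show k + 1 - m = 0 by omega, coeff_zero_eq_constantCoeff_apply, hg, mul_zero]

theorem coeff_exp_sub_one (n : ℕ) :
    coeff n (exp ℚ - 1) = if n = 0 then 0 else ((n ! : ℚ))⁻¹ := by
  split_ifs with hn <;> simp [coeff_one, hn]

theorem constantCoeff_exp_sub_one : constantCoeff (exp ℚ - 1) = 0 := by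
  simp

theorem prod_coeff_exp_sub_one {j : ℕ} (x : Fin j → ℕ) :
    ∏ l, coeff (x l) (exp ℚ - 1) = if ∀ l, 1 ≤ x l then (∏ l, ((x l)! : ℚ))⁻¹ else 0 := by
  split_ifs with hx
  · rw [← prod_inv_distrib]
    exact prod_congr rfl fun l _ => by rw [coeff_exp_sub_one, if_neg (by have := hx l; omega)]
  · obtain ⟨l, hl⟩ := not_forall.mp hx
    exact prod_eq_zero (mem_univ l) (by rw [coeff_exp_sub_one, if_pos (by omega)])

theorem exp_mul_rescale_neg_one_exp : exp ℚ * rescale (-1 : ℚ) (exp ℚ) = 1 := by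
  simpa [rescale_zero] using exp_mul_exp_eq_exp_add (A := ℚ) 1 (-1)

theorem coeff_exp_sub_one_mul_rescale_neg_one_exp {n : ℕ} (hn : n ≠ 0) :
    coeff n ((exp ℚ - 1) * rescale (-1 : ℚ) (exp ℚ)) = -(-1 : ℚ) ^ n / n ! := by
  rw [sub_mul, exp_mul_rescale_neg_one_exp, one_mul, map_sub, coeff_rescale, coeff_exp]
  simp only [coeff_one, hn, if_false, Algebra.algebraMap_self, one_div, map_inv₀, map_natCast,
    zero_sub]
  ring

end PowerSeries

theorem sum_multinomial_eq_coeff_exp_sub_one {j m k : ℕ} (hm : m ≤ k) :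
    ∑ i ∈ (Finset.Nat.antidiagonalTuple j m).filter (fun i => ∀ l, 1 ≤ i l),
        (-1 : ℚ) ^ j * ((k + 1)! : ℚ) / ((∏ l, ((i l)! : ℚ)) * ((k + 1 - m)! : ℚ)) =
      (k + 1)! * ((-1) ^ j *
        (coeff m ((exp ℚ - 1) ^ j) * coeff (k + 1 - m) (exp ℚ - 1))) := by
  rw [coeff_pow_eq_sum_antidiagonalTuple, coeff_exp_sub_one, if_neg (by omega), sum_filter,
    sum_mul, mul_sum, mul_sum]
  refine sum_congr rfl fun i _ => ?_
  rw [prod_coeff_exp_sub_one]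
  split_ifs
  · field_simp
  · simp

/-- Sign-cancellation identity: for `k ≥ 0`,
`1 + ∑_{j=1}^{k} ∑_{i₁+⋯+i_j = m, j ≤ m ≤ k, i_l ≥ 1} (-1)^j (k+1)!/(i₁!⋯i_j!(k+1-m)!) = (-1)^k`. -/
theorem multinomial_sign_cancellation (k : ℕ) :
    1 + ∑ j ∈ Finset.Icc 1 k, ∑ m ∈ Finset.Icc j k,
        ∑ i ∈ (Finset.Nat.antidiagonalTuple j m).filter (fun i => ∀ l, 1 ≤ i l),
          (-1 : ℚ) ^ j * ((k + 1).factorial : ℚ) /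
            ((∏ l, ((i l).factorial : ℚ)) * ((k + 1 - m).factorial : ℚ)) =
      (-1 : ℚ) ^ k := by
  set g : ℚ⟦X⟧ := exp ℚ - 1
  rw [sum_congr rfl fun j _ => sum_congr rfl fun m hm =>
    sum_multinomial_eq_coeff_exp_sub_one (mem_Icc.mp hm).2]
  simp only [← mul_sum, coeff_pow_succ_eq_sum_Icc constantCoeff_exp_sub_one]
  have split : ∑ j ∈ range (k + 1), (-1 : ℚ) ^ j • g ^ (j + 1) =
      g + ∑ j ∈ Icc 1 k, (-1 : ℚ) ^ j • g ^ (j + 1) := by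
    rw [range_eq_Ico, sum_eq_sum_Ico_succ_bot k.succ_pos]
    simp [Ico_add_one_right_eq_Icc]
  calc _ = (k + 1)! * coeff (k + 1) (∑ j ∈ range (k + 1), (-1 : ℚ) ^ j • g ^ (j + 1)) := by
        simp [split, mul_add, coeff_exp_sub_one, g, Nat.factorial_ne_zero]
    _ = (k + 1)! * coeff (k + 1) (g * rescale (-1 : ℚ) (exp ℚ)) := by
        rw [coeff_sum_range_neg_one_pow_smul_pow_succ constantCoeff_exp_sub_one
          (by rw [add_sub_cancel, exp_mul_rescale_neg_one_exp]) le_rfl]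
    _ = (-1) ^ k := by
        rw [coeff_exp_sub_one_mul_rescale_neg_one_exp k.add_one_ne_zero]
        field_simp
        ring
end

section
/- Let A = {1,...,n} and let δ ∈ Δ(n), i.e. δ : A → ℕ_0 with ∑_{i=j}^{n} δ_i ≥ n-j+1 for 1 < j ≤ n and ∑_{i=1}^{n} δ_i = n-1. Then there is a unique partial ordering ≺ on A such that: (1) δ(c) equals the number of immediate ≺-predecessors of c; (2) d ≺ c implies d < c; (3) d ≺ c and d < e < c imply e ≺ c. Conversely any partial order satisfying (2), (3) and having a unique maximal element arises this way. -/
/-- `Δ(n)`: maps `δ : {1,…,n} → ℕ₀` (indexed by `Fin n`) such that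
`∑_{i=j}^{n} δ_i ≥ n - j + 1` for all `1 < j ≤ n` and `∑_{i=1}^{n} δ_i = n - 1`. -/
def treeIndexSet (n : ℕ) : Set (Fin n → ℕ) :=
  {δ | (∀ j : Fin n, 0 < (j : ℕ) →
          n - (j : ℕ) ≤ ∑ i ∈ Finset.Ici j, δ i) ∧
       ∑ i, δ i = n - 1}

/-- The number of immediate predecessors of `c` for a relation `r`. -/
noncomputable def immPredCount {n : ℕ} (r : Fin n → Fin n → Prop) (c : Fin n) : ℕ :=
  Nat.card {d : Fin n // r d c ∧ ¬∃ e, r d e ∧ r e c}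

/-!
Conditions (2) and (3) say that `≺` is the descendant relation of a forest numbered in postorder:
the predecessors of `c` form an interval `[t, c)`. Every vertex has at most one immediate successor,
so `∑_{i ∈ [s, c]} δ i` counts the vertices whose immediate successor lies in `[s, c]`. For `s = t`
these are exactly the vertices of `[t, c)`, so the sum is `c - t`; for `t < s ≤ c` they include
`[s - 1, c)`, so the sum exceeds `c - s`. Hence `d ≺ c` holds iff `∑_{i ∈ [s, c]} δ i > c - s` for
every `s ∈ (d, c]`: this gives uniqueness, and taken as a definition it gives existence, the
prefix bounds of `Δ(n)` supplying the case `t = 0`. For the converse, the root `n - 1` has all of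
`A` as its interval.
-/

open Finset

namespace TreeIndexSet

variable {n : ℕ}

abbrev IsImmPred (r : Fin n → Fin n → Prop) (d c : Fin n) : Prop :=
  r d c ∧ ¬∃ e, r d e ∧ r e c

structure IsPostorderForest (r : Fin n → Fin n → Prop) : Prop where
  trans : ∀ a b c, r a b → r b c → r a c
  lt_of_rel : ∀ d c, r d c → d < c
  rel_of_lt_of_lt : ∀ d e c, r d c → d < e → e < c → r e c

def orderOfIndex (δ : Fin n → ℕ) (d c : Fin n) : Prop :=
  d < c ∧ ∀ s, d < s → s ≤ c → (c : ℕ) - s < ∑ i ∈ Icc s c, δ i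

open scoped Classical in
theorem immPredCount_eq_card (r : Fin n → Fin n → Prop) (c : Fin n) :
    immPredCount r c = #{d | IsImmPred r d c} := by
  rw [immPredCount, Nat.card_eq_fintype_card, Fintype.card_subtype]

theorem sum_Icc_add_sum_Icc (f : Fin n → ℕ) {a b b' c : Fin n} (hb' : (b' : ℕ) = b + 1)
    (hab : a ≤ b) (hbc : b' ≤ c) :
    ∑ i ∈ Icc a b, f i + ∑ i ∈ Icc b' c, f i = ∑ i ∈ Icc a c, f i := by
  rw [← sum_union]
  · congr 1
    ext i
    simp only [mem_union, mem_Icc, Fin.le_def] at *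
    omega
  · rw [disjoint_left]
    intro i hi hi'
    simp only [mem_Icc, Fin.le_def] at *
    omega

namespace IsPostorderForest

variable {r : Fin n → Fin n → Prop}

theorem eq_of_isImmPred (hr : IsPostorderForest r) {d c c' : Fin n} (hc : IsImmPred r d c)
    (hc' : IsImmPred r d c') : c = c' := by
  by_contra hne
  rcases lt_or_gt_of_ne hne with h | h
  · exact hc'.2 ⟨c, hc.1, hr.rel_of_lt_of_lt d c c' hc'.1 (hr.lt_of_rel d c hc.1) h⟩
  · exact hc.2 ⟨c', hc'.1, hr.rel_of_lt_of_lt d c' c hc.1 (hr.lt_of_rel d c' hc'.1) h⟩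

theorem exists_isImmPred_le (hr : IsPostorderForest r) {d c : Fin n} (h : r d c) :
    ∃ e, IsImmPred r d e ∧ e ≤ c := by
  obtain ⟨e, hde, hmin⟩ := wellFounded_lt.has_min {e | r d e} ⟨c, h⟩
  refine ⟨e, ⟨hde, fun ⟨x, hdx, hxe⟩ => hmin x hdx (hr.lt_of_rel x e hxe)⟩, not_lt.1 (hmin c h)⟩

theorem exists_rel_iff_le_and_lt (hr : IsPostorderForest r) (c : Fin n) :
    ∃ t ≤ c, ∀ d, r d c ↔ t ≤ d ∧ d < c := by
  obtain ⟨t, htc, hmin⟩ := wellFounded_lt.has_min {d | r d c ∨ d = c} ⟨c, Or.inr rfl⟩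
  refine ⟨t, ?_, fun d => ⟨fun hd => ⟨not_lt.1 (hmin d (Or.inl hd)), hr.lt_of_rel d c hd⟩, ?_⟩⟩
  · rcases htc with htc | rfl
    · exact (hr.lt_of_rel t c htc).le
    · exact le_rfl
  · rintro ⟨htd, hdc⟩
    rcases htc with htc | rfl
    · rcases htd.eq_or_lt with rfl | htd
      · exact htc
      · exact hr.rel_of_lt_of_lt t d c htc htd hdc
    · exact absurd hdc (not_lt.2 htd)

open scoped Classical in
theorem sum_immPredCount (hr : IsPostorderForest r) (T : Finset (Fin n)) :
    ∑ c ∈ T, immPredCount r c = #{d | ∃ e ∈ T, IsImmPred r d e} := by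
  simp_rw [immPredCount_eq_card]
  rw [← card_biUnion]
  · congr 1
    ext d
    simp
  · intro c _ c' _ hne
    simp only [Function.onFun, disjoint_left, mem_filter, mem_univ, true_and]
    exact fun d hc hc' => hne (hr.eq_of_isImmPred hc hc')

theorem sum_Icc_immPredCount_eq (hr : IsPostorderForest r) {t c : Fin n} (htc : t ≤ c)
    (hpred : ∀ d, r d c ↔ t ≤ d ∧ d < c) :
    ∑ i ∈ Icc t c, immPredCount r i = (c : ℕ) - t := by
  classical
  rw [hr.sum_immPredCount, ← Fin.card_Ico]
  congr 1
  ext d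
  simp only [mem_filter, mem_univ, true_and, mem_Icc, mem_Ico]
  constructor
  · rintro ⟨e, ⟨hte, hec⟩, hde, -⟩
    refine (hpred d).1 ?_
    rcases hec.eq_or_lt with rfl | hec
    · exact hde
    · exact hr.trans d e c hde ((hpred e).2 ⟨hte, hec⟩)
  · intro hd
    obtain ⟨e, hde, hec⟩ := hr.exists_isImmPred_le ((hpred d).2 hd)
    exact ⟨e, ⟨hd.1.trans (hr.lt_of_rel d e hde.1).le, hec⟩, hde⟩

theorem lt_sum_Icc_immPredCount (hr : IsPostorderForest r) {t s c : Fin n}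
    (hpred : ∀ d, r d c ↔ t ≤ d ∧ d < c) (hts : t < s) (hsc : s ≤ c) :
    (c : ℕ) - s < ∑ i ∈ Icc s c, immPredCount r i := by
  classical
  rw [hr.sum_immPredCount]
  let p : Fin n := ⟨s - 1, by omega⟩
  have hp : (c : ℕ) - s < #(Ico p c) := by
    rw [Fin.card_Ico]
    simp only [Fin.lt_def, Fin.le_def, p] at *
    omega
  refine hp.trans_le (card_le_card fun d hd => ?_)
  simp only [mem_filter, mem_univ, true_and, mem_Icc]
  rw [mem_Ico] at hd
  have hpd : t ≤ d := by
    simp only [Fin.lt_def, Fin.le_def, p] at *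
    omega
  obtain ⟨e, hde, hec⟩ := hr.exists_isImmPred_le ((hpred d).2 ⟨hpd, hd.2⟩)
  have hdlt := hr.lt_of_rel d e hde.1
  refine ⟨e, ⟨?_, hec⟩, hde⟩
  simp only [Fin.lt_def, Fin.le_def, p] at *
  omega

theorem rel_of_forall_not_rel (hr : IsPostorderForest r) (hroot : ∃! a, ∀ b, ¬ r a b)
    {d c : Fin n} (hc : ∀ b, ¬ r c b) (hdc : d ≠ c) : r d c := by
  obtain ⟨a, -, huniq⟩ := hroot
  obtain ⟨e, hde, hmax⟩ := wellFounded_gt.has_min {e | e = d ∨ r d e} ⟨d, Or.inl rfl⟩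
  have he : ∀ b, ¬ r e b := by
    intro b heb
    refine hmax b ?_ (hr.lt_of_rel e b heb)
    rcases hde with rfl | hde
    · exact Or.inr heb
    · exact Or.inr (hr.trans d e b hde heb)
  obtain rfl : e = c := (huniq e he).trans (huniq c hc).symm
  exact hde.resolve_left (Ne.symm hdc)

theorem eq_orderOfIndex (hr : IsPostorderForest r) : r = orderOfIndex (immPredCount r) := by
  ext d c
  obtain ⟨t, htc, hpred⟩ := hr.exists_rel_iff_le_and_lt c
  constructor
  · intro hdc
    have htd := ((hpred d).1 hdc).1
    exact ⟨hr.lt_of_rel d c hdc,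
      fun s hds hsc => hr.lt_sum_Icc_immPredCount hpred (htd.trans_lt hds) hsc⟩
  · rintro ⟨hdc, hsum⟩
    by_contra hndc
    have hdt : d < t := by
      by_contra! htd
      exact hndc ((hpred d).2 ⟨htd, hdc⟩)
    have := hsum t hdt htc
    rw [hr.sum_Icc_immPredCount_eq htc hpred] at this
    exact lt_irrefl _ this

theorem immPredCount_mem_treeIndexSet (hr : IsPostorderForest r)
    (hroot : ∃! a, ∀ b, ¬ r a b) : immPredCount r ∈ treeIndexSet n := by
  obtain ⟨a, -⟩ := hroot.exists
  have hn : 0 < n := a.pos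
  let bot : Fin n := ⟨0, hn⟩
  let last : Fin n := ⟨n - 1, by omega⟩
  have hlast : ∀ b, ¬ r last b := fun b h => by
    have := Fin.lt_def.1 (hr.lt_of_rel last b h)
    simp only [last] at this
    omega
  have hpred : ∀ d, r d last ↔ bot ≤ d ∧ d < last := fun d =>
    ⟨fun h => ⟨Fin.le_def.2 (Nat.zero_le _), hr.lt_of_rel d last h⟩,
      fun h => hr.rel_of_forall_not_rel hroot hlast h.2.ne⟩
  refine ⟨fun j hj => ?_, ?_⟩
  · have hIcc : Icc j last = Ici j := by
      ext i
      simp only [mem_Icc, mem_Ici, Fin.le_def, last]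
      omega
    have hjlast : j ≤ last := Fin.le_def.2 (by simp only [last]; omega)
    have := hr.lt_sum_Icc_immPredCount hpred (Fin.lt_def.2 hj) hjlast
    rw [hIcc] at this
    simp only [last] at this
    omega
  · have hIcc : Icc bot last = univ := by
      ext i
      simp only [mem_Icc, mem_univ, Fin.le_def, bot, last, iff_true]
      omega
    rw [← hIcc, hr.sum_Icc_immPredCount_eq (Fin.le_def.2 (Nat.zero_le _)) hpred]
    rfl

end IsPostorderForest

theorem isPostorderForest_orderOfIndex (δ : Fin n → ℕ) : IsPostorderForest (orderOfIndex δ) where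
  trans a b c hab hbc := by
    refine ⟨hab.1.trans hbc.1, fun s has hsc => ?_⟩
    rcases lt_or_ge b s with hbs | hsb
    · exact hbc.2 s hbs hsc
    · let b' : Fin n := ⟨b + 1, by have := Fin.lt_def.1 hbc.1; omega⟩
      have hbb' : b < b' := Fin.lt_def.2 (Nat.lt_succ_self _)
      have hb'c : b' ≤ c := Fin.le_def.2 (Fin.lt_def.1 hbc.1)
      have h₁ := hab.2 s has hsb
      have h₂ := hbc.2 b' hbb' hb'c
      rw [← sum_Icc_add_sum_Icc δ rfl hsb hb'c]
      simp only [b', Fin.le_def] at *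
      omega
  lt_of_rel _ _ h := h.1
  rel_of_lt_of_lt _ _ _ h hde hec := ⟨hec, fun s hes hsc => h.2 s (hde.trans hes) hsc⟩

theorem sum_Icc_eq_of_orderOfIndex {δ : Fin n → ℕ} (hδ : ∀ c, ∑ i ∈ Iic c, δ i ≤ c)
    {t c : Fin n} (htc : t ≤ c) (hpred : ∀ d, orderOfIndex δ d c ↔ t ≤ d ∧ d < c) :
    ∑ i ∈ Icc t c, δ i = (c : ℕ) - t := by
  apply le_antisymm
  · by_cases ht : (t : ℕ) = 0
    · have hIcc : Icc t c = Iic c := by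
        ext i
        simp only [mem_Icc, mem_Iic, Fin.le_def, ht, zero_le, true_and]
      rw [hIcc, ht]
      exact hδ c
    · let p : Fin n := ⟨t - 1, by omega⟩
      have hpt : p < t := Fin.lt_def.2 (by simp only [p]; omega)
      have hnp : ¬ orderOfIndex δ p c := fun h => absurd ((hpred p).1 h).1 (not_le.2 hpt)
      have hpc : p < c := hpt.trans_le htc
      simp only [orderOfIndex, hpc, true_and, not_forall, not_lt] at hnp
      obtain ⟨s, hps, hsc, hs⟩ := hnp
      obtain rfl : s = t := by
        by_contra hst
        have hts : t < s := by
          simp only [Fin.lt_def, Fin.le_def, p, Fin.ext_iff] at *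
          omega
        exact absurd (((hpred t).2 ⟨le_rfl, hts.trans_le hsc⟩).2 s hts hsc) (not_lt.2 hs)
      exact hs
  · rcases htc.eq_or_lt with rfl | htc
    · simp
    · let s : Fin n := ⟨t + 1, by have := Fin.lt_def.1 htc; omega⟩
      have hts : t < s := Fin.lt_def.2 (Nat.lt_succ_self _)
      have hsc : s ≤ c := Fin.le_def.2 (Fin.lt_def.1 htc)
      have h₁ := ((hpred t).2 ⟨le_rfl, htc⟩).2 s hts hsc
      have h₂ : ∑ i ∈ Icc s c, δ i ≤ ∑ i ∈ Icc t c, δ i :=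
        sum_le_sum_of_subset (Icc_subset_Icc_left hts.le)
      have hs : (s : ℕ) = t + 1 := rfl
      omega

theorem immPredCount_orderOfIndex {δ : Fin n → ℕ} (hδ : ∀ c, ∑ i ∈ Iic c, δ i ≤ c) :
    immPredCount (orderOfIndex δ) = δ := by
  have hr := isPostorderForest_orderOfIndex δ
  funext c
  induction c using WellFoundedLT.induction with
  | _ c ih =>
    obtain ⟨t, htc, hpred⟩ := hr.exists_rel_iff_le_and_lt c
    have hκ := hr.sum_Icc_immPredCount_eq htc hpred
    have hδ := sum_Icc_eq_of_orderOfIndex hδ htc hpred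
    rw [← sum_Ico_add_eq_sum_Icc htc] at hκ hδ
    have hIco : ∑ i ∈ Ico t c, immPredCount (orderOfIndex δ) i = ∑ i ∈ Ico t c, δ i :=
      sum_congr rfl fun i hi => ih i (mem_Ico.1 hi).2
    omega

theorem sum_Iic_le_of_mem_treeIndexSet {δ : Fin n → ℕ} (hδ : δ ∈ treeIndexSet n) (c : Fin n) :
    ∑ i ∈ Iic c, δ i ≤ c := by
  obtain ⟨hsuffix, htotal⟩ := hδ
  by_cases hc : (c : ℕ) + 1 < n
  · let j : Fin n := ⟨c + 1, hc⟩
    have hsplit : ∑ i ∈ Iic c, δ i + ∑ i ∈ Ici j, δ i = ∑ i, δ i := by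
      rw [← sum_union]
      · congr 1
        ext i
        simp only [mem_union, mem_Iic, mem_Ici, mem_univ, iff_true, Fin.le_def, j]
        omega
      · rw [disjoint_left]
        intro i hi hi'
        simp only [mem_Iic, mem_Ici, Fin.le_def, j] at hi hi'
        omega
    have := hsuffix j (Nat.succ_pos _)
    have hj : (j : ℕ) = c + 1 := rfl
    omega
  · have hIic : Iic c = univ := by
      ext i
      simp only [mem_Iic, mem_univ, iff_true, Fin.le_def]
      omega
    rw [hIic, htotal]
    omega

end TreeIndexSet

open TreeIndexSet

theorem treeIndexSet_order_correspondence_general {n : ℕ} (δ : Fin n → ℕ)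
    (hδ : δ ∈ treeIndexSet n) :
    (∃! r : Fin n → Fin n → Prop,
        (∀ a, ¬ r a a) ∧ (∀ a b c, r a b → r b c → r a c) ∧
        (∀ c, δ c = immPredCount r c) ∧
        (∀ d c, r d c → d < c) ∧
        (∀ d e c, r d c → d < e → e < c → r e c)) ∧
      (∀ r : Fin n → Fin n → Prop,
        (∀ a, ¬ r a a) → (∀ a b c, r a b → r b c → r a c) →
        (∀ d c, r d c → d < c) →
        (∀ d e c, r d c → d < e → e < c → r e c) →
        (∃! a : Fin n, ∀ b, ¬ r a b) →
        (fun c => immPredCount r c) ∈ treeIndexSet n) := by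
  refine ⟨⟨orderOfIndex δ, ?_, ?_⟩, fun r _ htrans hlt hint hroot =>
    IsPostorderForest.immPredCount_mem_treeIndexSet ⟨htrans, hlt, hint⟩ hroot⟩
  · have hr := isPostorderForest_orderOfIndex δ
    have hκ := immPredCount_orderOfIndex (sum_Iic_le_of_mem_treeIndexSet hδ)
    exact ⟨fun a h => lt_irrefl a (hr.lt_of_rel a a h), hr.trans, fun c => by rw [hκ],
      hr.lt_of_rel, hr.rel_of_lt_of_lt⟩
  · rintro r ⟨-, htrans, hcount, hlt, hint⟩
    have hr : IsPostorderForest r := ⟨htrans, hlt, hint⟩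
    rw [hr.eq_orderOfIndex, ← funext hcount]

/-- A simple index set `δ ∈ Δ(n)` induces a unique partial (strict) ordering `≺` on
`{1,…,n}` such that (1) `δ(c)` is the number of immediate `≺`-predecessors of `c`;
(2) `d ≺ c` implies `d < c`; (3) `d ≺ c` and `d < e < c` imply `e ≺ c`.
Conversely, any such ordering with a unique maximal element arises this way. -/
theorem treeIndexSet_order_correspondence {n : ℕ} (hn : 0 < n) (δ : Fin n → ℕ)
    (hδ : δ ∈ treeIndexSet n) :
    (∃! r : Fin n → Fin n → Prop,
        (∀ a, ¬ r a a) ∧ (∀ a b c, r a b → r b c → r a c) ∧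
        (∀ c, δ c = immPredCount r c) ∧
        (∀ d c, r d c → d < c) ∧
        (∀ d e c, r d c → d < e → e < c → r e c)) ∧
      (∀ r : Fin n → Fin n → Prop,
        (∀ a, ¬ r a a) → (∀ a b c, r a b → r b c → r a c) →
        (∀ d c, r d c → d < c) →
        (∀ d e c, r d c → d < e → e < c → r e c) →
        (∃! a : Fin n, ∀ b, ¬ r a b) →
        (fun c => immPredCount r c) ∈ treeIndexSet n) :=
  treeIndexSet_order_correspondence_general δ hδ
end

section
/- Let s > σ_1 + σ_2 > 0 and define for functions a on ℤ^d × ℝ^d the weighted norm ‖a‖_s = ∫ |â(w)| e^{s|w|} κ(dw). If the Moyal commutator [a,b]_ħ has Fourier transform given by the twisted convolution with kernel σ_ħ^1 satisfying |σ_ħ^1(w', w - w')| ≤ 2|w'||w-w'|, then ‖[a,b]_ħ‖_{s-σ_1-σ_2} ≤ (2/(e² σ_1(σ_1+σ_2))) ‖a‖_s ‖b‖_{s-σ_2}. -/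
open MeasureTheory

/-- The frequency space `𝒵^{2d} = ℤ^d × ℝ^d`. -/
abbrev FreqSpace (d : ℕ) := (Fin d → ℤ) × (Fin d → ℝ)

/-- The measure `κ` on `ℤ^d × ℝ^d`: counting measure times Lebesgue measure. -/
noncomputable def freqMeasure (d : ℕ) : Measure (FreqSpace d) :=
  (Measure.count : Measure (Fin d → ℤ)).prod (volume : Measure (Fin d → ℝ))

/-- Euclidean norm of `w = (k,η) ∈ ℤ^d × ℝ^d` viewed in `ℝ^{2d}`. -/
noncomputable def freqNorm {d : ℕ} (w : FreqSpace d) : ℝ :=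
  Real.sqrt ((∑ i, ((w.1 i : ℝ)) ^ 2) + ∑ i, (w.2 i) ^ 2)

/-- The weighted norm `‖a‖_s = ∫ |â(w)| e^{s|w|} κ(dw)` (on the Fourier side). -/
noncomputable def freqWeightedNorm {d : ℕ} (s : ℝ) (f : FreqSpace d → ℂ) : ℝ :=
  ∫ w, ‖f w‖ * Real.exp (s * freqNorm w) ∂(freqMeasure d)

/-!
Write `t = s - σ₁ - σ₂`. Since `|w| ≤ |w'| + |w - w'|`, the weight `e^{t|w|}` splits into
`e^{t|w'|} e^{t|w - w'|}`, and each of the two factors `|w'|`, `|w - w'|` of the kernel bound is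
absorbed by raising the corresponding exponent, at the price `sup_{r ≥ 0} r e^{-σ r} = 1/(eσ)`:
`|w'|` raises `t` to `s` (`σ = σ₁ + σ₂`) and `|w - w'|` raises it to `s - σ₂` (`σ = σ₁`).
The resulting pointwise bound for the integrand of the twisted convolution is integrated with
Tonelli and the translation invariance of `κ`.
-/

open scoped ENNReal

namespace Real

theorem mul_exp_mul_le {σ : ℝ} (hσ : 0 < σ) (t r : ℝ) :
    r * exp (t * r) ≤ (exp 1 * σ)⁻¹ * exp ((t + σ) * r) := by
  have hscaled : σ * (r * exp (t * r)) ≤ σ * ((exp 1 * σ)⁻¹ * exp ((t + σ) * r)) :=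
    calc σ * (r * exp (t * r)) = (σ * r - 1 + 1) * exp (t * r) := by ring
      _ ≤ exp (σ * r - 1) * exp (t * r) := by gcongr; exact add_one_le_exp _
      _ = σ * ((exp 1 * σ)⁻¹ * exp ((t + σ) * r)) := by
        rw [← exp_add, show σ * r - 1 + t * r = (t + σ) * r - 1 by ring, exp_sub]
        field_simp
  exact le_of_mul_le_mul_left hscaled hσ

theorem mul_mul_exp_le_of_le_add {a b r t σ τ : ℝ} (ha : 0 ≤ a) (hb : 0 ≤ b) (hr : r ≤ a + b)
    (ht : 0 ≤ t) (hσ : 0 < σ) (hτ : 0 < τ) :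
    a * b * exp (t * r) ≤
      ((exp 1 * σ) * (exp 1 * τ))⁻¹ * (exp ((t + σ) * a) * exp ((t + τ) * b)) :=
  calc a * b * exp (t * r) ≤ a * b * exp (t * a + t * b) := by
        gcongr; nlinarith
    _ = (a * exp (t * a)) * (b * exp (t * b)) := by rw [exp_add]; ring
    _ ≤ ((exp 1 * σ)⁻¹ * exp ((t + σ) * a)) * ((exp 1 * τ)⁻¹ * exp ((t + τ) * b)) :=
        mul_le_mul (mul_exp_mul_le hσ t a) (mul_exp_mul_le hτ t b) (by positivity)
          (by positivity)
    _ = _ := by rw [mul_inv]; ring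

end Real

noncomputable def FreqSpace.toEuclidean (d : ℕ) :
    FreqSpace d →+ EuclideanSpace ℝ (Fin d ⊕ Fin d) where
  toFun w := WithLp.toLp 2 (Sum.elim (fun i => (w.1 i : ℝ)) w.2)
  map_zero' := by ext (i | i) <;> simp
  map_add' v w := by ext (i | i) <;> simp

theorem freqNorm_eq_norm_toEuclidean {d : ℕ} (w : FreqSpace d) :
    freqNorm w = ‖FreqSpace.toEuclidean d w‖ := by
  simp [freqNorm, FreqSpace.toEuclidean, EuclideanSpace.norm_eq, Fintype.sum_sum_type]

theorem freqNorm_nonneg {d : ℕ} (w : FreqSpace d) : 0 ≤ freqNorm w :=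
  Real.sqrt_nonneg _

theorem freqNorm_add_le {d : ℕ} (v w : FreqSpace d) :
    freqNorm (v + w) ≤ freqNorm v + freqNorm w := by
  simp only [freqNorm_eq_norm_toEuclidean, map_add]
  exact norm_add_le _ _

instance (d : ℕ) : SFinite (freqMeasure d) := by
  unfold freqMeasure; infer_instance

instance (d : ℕ) : (freqMeasure d).IsAddRightInvariant := by
  unfold freqMeasure; infer_instance

namespace MeasureTheory

theorem integral_le_toReal_lintegral_ofReal {α : Type*} [MeasurableSpace α] {μ : Measure α}
    (f : α → ℝ) : ∫ a, f a ∂μ ≤ (∫⁻ a, .ofReal (f a) ∂μ).toReal := by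
  by_cases hf : Integrable f μ
  · rw [integral_eq_lintegral_pos_part_sub_lintegral_neg_part hf]
    exact sub_le_self _ ENNReal.toReal_nonneg
  · rw [integral_undef hf]
    exact ENNReal.toReal_nonneg

section AddGroup

variable {G : Type*} [AddGroup G] [MeasurableSpace G] [MeasurableAdd₂ G] [MeasurableNeg G]
  {μ : Measure G} [SFinite μ] [μ.IsAddRightInvariant]

theorem lintegral_lintegral_mul_sub {f g : G → ℝ≥0∞} (hf : AEMeasurable f μ)
    (hg : AEMeasurable g μ) :
    ∫⁻ w, ∫⁻ w', f w' * g (w - w') ∂μ ∂μ = (∫⁻ w, f w ∂μ) * ∫⁻ w, g w ∂μ := by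
  rw [lintegral_lintegral_swap ((hf.comp_quasiMeasurePreserving
    (Measure.quasiMeasurePreserving_snd)).mul
    (hg.comp_quasiMeasurePreserving (quasiMeasurePreserving_sub_of_right_invariant μ μ)))]
  calc ∫⁻ w', ∫⁻ w, f w' * g (w - w') ∂μ ∂μ = ∫⁻ w', f w' * ∫⁻ w, g w ∂μ ∂μ :=
        lintegral_congr fun w' => by
          rw [lintegral_const_mul'' _ (f := fun w => g (w - w')) (hg.comp_quasiMeasurePreserving
            (measurePreserving_sub_right μ w').quasiMeasurePreserving),
            lintegral_sub_right_eq_self]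
    _ = (∫⁻ w, f w ∂μ) * ∫⁻ w, g w ∂μ := lintegral_mul_const'' _ hf

theorem integral_norm_mul_le_of_norm_mul_le_convolution {E : Type*} [NormedAddCommGroup E]
    [NormedSpace ℝ E] {Φ : G → G → E} {C : G → E} {W F H : G → ℝ}
    (hC : ∀ w, C w = ∫ w', Φ w w' ∂μ) (hΦ : ∀ w w', ‖Φ w w'‖ * W w ≤ F w' * H (w - w'))
    (hF₀ : 0 ≤ F) (hH₀ : 0 ≤ H) (hF : Integrable F μ) (hH : Integrable H μ) :
    ∫ w, ‖C w‖ * W w ∂μ ≤ (∫ w, F w ∂μ) * ∫ w, H w ∂μ := by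
  have hpointwise : ∀ w, ENNReal.ofReal (‖C w‖ * W w) ≤
      ∫⁻ w', ENNReal.ofReal (F w') * ENNReal.ofReal (H (w - w')) ∂μ := fun w =>
    calc ENNReal.ofReal (‖C w‖ * W w) = ‖C w‖ₑ * ENNReal.ofReal (W w) := by
          rw [ENNReal.ofReal_mul (norm_nonneg _), ofReal_norm]
      _ ≤ (∫⁻ w', ‖Φ w w'‖ₑ ∂μ) * ENNReal.ofReal (W w) := by
          gcongr; rw [hC]; exact enorm_integral_le_lintegral_enorm _
      _ = ∫⁻ w', ‖Φ w w'‖ₑ * ENNReal.ofReal (W w) ∂μ :=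
          (lintegral_mul_const' _ _ ENNReal.ofReal_ne_top).symm
      _ ≤ ∫⁻ w', ENNReal.ofReal (F w') * ENNReal.ofReal (H (w - w')) ∂μ := by
          refine lintegral_mono fun w' => ?_
          rw [← ofReal_norm, ← ENNReal.ofReal_mul (norm_nonneg _),
            ← ENNReal.ofReal_mul (hF₀ w')]
          exact ENNReal.ofReal_le_ofReal (hΦ w w')
  have hF_lint := ofReal_integral_eq_lintegral_ofReal hF (.of_forall hF₀)
  have hH_lint := ofReal_integral_eq_lintegral_ofReal hH (.of_forall hH₀)
  have hconv := lintegral_lintegral_mul_sub (μ := μ) hF.aemeasurable.ennreal_ofReal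
    hH.aemeasurable.ennreal_ofReal
  calc ∫ w, ‖C w‖ * W w ∂μ ≤ (∫⁻ w, ENNReal.ofReal (‖C w‖ * W w) ∂μ).toReal :=
        integral_le_toReal_lintegral_ofReal _
    _ ≤ ((∫⁻ w, ENNReal.ofReal (F w) ∂μ) * ∫⁻ w, ENNReal.ofReal (H w) ∂μ).toReal := by
        rw [← hconv]
        refine ENNReal.toReal_mono ?_ (lintegral_mono hpointwise)
        rw [hconv, ← hF_lint, ← hH_lint]
        exact ENNReal.mul_ne_top ENNReal.ofReal_ne_top ENNReal.ofReal_ne_top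
    _ = (∫ w, F w ∂μ) * ∫ w, H w ∂μ := by
        rw [ENNReal.toReal_mul, ← hF_lint, ← hH_lint,
          ENNReal.toReal_ofReal (integral_nonneg hF₀), ENNReal.toReal_ofReal (integral_nonneg hH₀)]

end AddGroup

end MeasureTheory

theorem moyal_commutator_norm_bound_general {d : ℕ} (s σ₁ σ₂ : ℝ)
    (hσ₁ : 0 < σ₁) (hσ₂ : 0 < σ₂) (hs : σ₁ + σ₂ < s)
    (A B : FreqSpace d → ℂ)
    (K : FreqSpace d → FreqSpace d → ℝ)
    (hK : ∀ w' u, |K w' u| ≤ 2 * freqNorm w' * freqNorm u)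
    (hAint : Integrable (fun w => ‖A w‖ * Real.exp (s * freqNorm w))
      (freqMeasure d))
    (hBint : Integrable
      (fun w => ‖B w‖ * Real.exp ((s - σ₂) * freqNorm w))
      (freqMeasure d))
    (C : FreqSpace d → ℂ)
    (hC : ∀ w, C w = ∫ w', A w' * B (w - w') * (K w' (w - w') : ℂ) ∂(freqMeasure d)) :
    freqWeightedNorm (s - σ₁ - σ₂) C ≤
      2 / (Real.exp 1 ^ 2 * σ₁ * (σ₁ + σ₂)) *
        freqWeightedNorm s A * freqWeightedNorm (s - σ₂) B := by
  set c := 2 / (Real.exp 1 ^ 2 * σ₁ * (σ₁ + σ₂))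
  have hc : c = 2 * ((Real.exp 1 * (σ₁ + σ₂)) * (Real.exp 1 * σ₁))⁻¹ := by
    simp only [c, mul_inv, div_eq_mul_inv, sq]; ring
  have hkernel : ∀ w w', ‖A w' * B (w - w') * (K w' (w - w') : ℂ)‖ *
      Real.exp ((s - σ₁ - σ₂) * freqNorm w) ≤
        c * (‖A w'‖ * Real.exp (s * freqNorm w')) *
          (‖B (w - w')‖ * Real.exp ((s - σ₂) * freqNorm (w - w'))) := by
    intro w w'
    have hweight := Real.mul_mul_exp_le_of_le_add (freqNorm_nonneg w')
      (freqNorm_nonneg (w - w')) (by simpa using freqNorm_add_le w' (w - w'))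
      (by linarith : 0 ≤ s - σ₁ - σ₂) (by linarith : 0 < σ₁ + σ₂) hσ₁
    rw [show s - σ₁ - σ₂ + (σ₁ + σ₂) = s by ring, show s - σ₁ - σ₂ + σ₁ = s - σ₂ by ring]
      at hweight
    rw [norm_mul, norm_mul, Complex.norm_real, Real.norm_eq_abs]
    calc ‖A w'‖ * ‖B (w - w')‖ * |K w' (w - w')| * Real.exp ((s - σ₁ - σ₂) * freqNorm w)
        ≤ ‖A w'‖ * ‖B (w - w')‖ * (2 * freqNorm w' * freqNorm (w - w')) *
            Real.exp ((s - σ₁ - σ₂) * freqNorm w) := by gcongr; exact hK _ _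
      _ = ‖A w'‖ * ‖B (w - w')‖ * 2 * (freqNorm w' * freqNorm (w - w') *
            Real.exp ((s - σ₁ - σ₂) * freqNorm w)) := by ring
      _ ≤ ‖A w'‖ * ‖B (w - w')‖ * 2 * (((Real.exp 1 * (σ₁ + σ₂)) * (Real.exp 1 * σ₁))⁻¹ *
            (Real.exp (s * freqNorm w') * Real.exp ((s - σ₂) * freqNorm (w - w')))) := by
          gcongr
      _ = _ := by rw [hc]; ring
  calc freqWeightedNorm (s - σ₁ - σ₂) C
      ≤ (∫ w, c * (‖A w‖ * Real.exp (s * freqNorm w)) ∂freqMeasure d) *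
          ∫ w, ‖B w‖ * Real.exp ((s - σ₂) * freqNorm w) ∂freqMeasure d :=
        integral_norm_mul_le_of_norm_mul_le_convolution hC hkernel (fun w => by positivity)
          (fun w => by positivity) (hAint.const_mul c) hBint
    _ = c * freqWeightedNorm s A * freqWeightedNorm (s - σ₂) B := by
        rw [integral_const_mul]; rfl

/-- Loss-of-analyticity estimate for the Moyal commutator: if the Fourier transform
of `[a,b]_ħ` is the twisted convolution of `â` and `b̂` with a kernel `K` obeying
`|K(w', w-w')| ≤ 2|w'||w-w'|`, then
`‖[a,b]_ħ‖_{s-σ₁-σ₂} ≤ (2/(e²σ₁(σ₁+σ₂))) ‖a‖_s ‖b‖_{s-σ₂}`. -/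
theorem moyal_commutator_norm_bound {d : ℕ} (s σ₁ σ₂ : ℝ)
    (hσ₁ : 0 < σ₁) (hσ₂ : 0 < σ₂) (hs : σ₁ + σ₂ < s)
    (A B : FreqSpace d → ℂ) (hA : Measurable A) (hB : Measurable B)
    (K : FreqSpace d → FreqSpace d → ℝ)
    (hKmeas : Measurable (Function.uncurry K))
    (hK : ∀ w' u, |K w' u| ≤ 2 * freqNorm w' * freqNorm u)
    (hAint : Integrable (fun w => ‖A w‖ * Real.exp (s * freqNorm w))
      (freqMeasure d))
    (hBint : Integrable
      (fun w => ‖B w‖ * Real.exp ((s - σ₂) * freqNorm w))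
      (freqMeasure d))
    (C : FreqSpace d → ℂ)
    (hC : ∀ w, C w = ∫ w', A w' * B (w - w') * (K w' (w - w') : ℂ) ∂(freqMeasure d)) :
    freqWeightedNorm (s - σ₁ - σ₂) C ≤
      2 / (Real.exp 1 ^ 2 * σ₁ * (σ₁ + σ₂)) *
        freqWeightedNorm s A * freqWeightedNorm (s - σ₂) B :=
  moyal_commutator_norm_bound_general s σ₁ σ₂ hσ₁ hσ₂ hs A B K hK hAint hBint C hC
end
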